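/- Let 0 < q₁ < p₁ ≤ 1, 0 < q₂ < p₂ ≤ 1, let n, m ≥ 1, and let f : [0,1]² → ℝ be continuously differentiable on [0,1]². Then for every (x,y) ∈ [0,1]², |B_{n,m}(f;x,y) - f(x,y)| ≤ ‖∂f/∂x‖_∞ √( (p₁^{n-1}/[n]_{p₁,q₁})(x - x²) ) + ‖∂f/∂y‖_∞ √( (p₂^{m-1}/[m]_{p₂,q₂})(y - y²) ), where ‖·‖_∞ denotes the supremum norm over [0,1]². -/

import Mathlib

open Finset Set Filter Topology

/-- The (p,q)-integer `[n]_{p,q} = ∑_{i=0}^{n-1} p^(n-1-i) q^i`. -/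
noncomputable def pqInt (p q : ℝ) (n : ℕ) : ℝ :=
  ∑ i ∈ Finset.range n, p ^ (n - 1 - i) * q ^ i

/-- The (p,q)-factorial `[n]_{p,q}! = ∏_{j=1}^n [j]_{p,q}`. -/
noncomputable def pqFactorial (p q : ℝ) (n : ℕ) : ℝ :=
  ∏ j ∈ Finset.range n, pqInt p q (j + 1)

/-- The (p,q)-binomial coefficient. -/
noncomputable def pqChoose (p q : ℝ) (n k : ℕ) : ℝ :=
  pqFactorial p q n / (pqFactorial p q k * pqFactorial p q (n - k))

/-- The node `p^(n-k) [k]_{p,q} / [n]_{p,q}` of the (p,q)-Bernstein operator. -/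
noncomputable def pqNode (p q : ℝ) (n k : ℕ) : ℝ :=
  p ^ (n - k) * pqInt p q k / pqInt p q n

/-- The basis function
`p^((k(k-1)-n(n-1))/2) C(n,k)_{p,q} x^k ∏_{s=0}^{n-k-1} (p^s - q^s x)`,
where `p^((k(k-1)-n(n-1))/2)` is written as `p^(k(k-1)/2) / p^(n(n-1)/2)`. -/
noncomputable def pqBasis (p q : ℝ) (n k : ℕ) (x : ℝ) : ℝ :=
  (p ^ (k.choose 2) / p ^ (n.choose 2)) * pqChoose p q n k * x ^ k *
    ∏ s ∈ Finset.range (n - k), (p ^ s - q ^ s * x)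

/-- The (p,q)-Bernstein operator `B_{n,p,q}(f;x)`. -/
noncomputable def pqBernstein (p q : ℝ) (n : ℕ) (f : ℝ → ℝ) (x : ℝ) : ℝ :=
  ∑ k ∈ Finset.range (n + 1), pqBasis p q n k x * f (pqNode p q n k)

/-- The bivariate (p,q)-Bernstein operator
`B_{n,m}^{(p₁,q₁),(p₂,q₂)}(f;x,y)`. -/
noncomputable def pqBernstein2 (p₁ q₁ p₂ q₂ : ℝ) (n m : ℕ)
    (f : ℝ → ℝ → ℝ) (x y : ℝ) : ℝ :=
  ∑ k ∈ Finset.range (n + 1), ∑ j ∈ Finset.range (m + 1),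
    pqBasis p₁ q₁ n k x * pqBasis p₂ q₂ m j y *
      f (pqNode p₁ q₁ n k) (pqNode p₂ q₂ m j)

/-- The partial derivative with respect to the first variable. -/
noncomputable def pdx (g : ℝ → ℝ → ℝ) : ℝ → ℝ → ℝ :=
  fun x y => deriv (fun u => g u y) x

/-- The partial derivative with respect to the second variable. -/
noncomputable def pdy (g : ℝ → ℝ → ℝ) : ℝ → ℝ → ℝ :=
  fun x y => deriv (fun v => g x v) y

/-- The supremum norm of a bivariate function over `[0,1]²`. -/
noncomputable def supNorm2 (g : ℝ → ℝ → ℝ) : ℝ :=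
  sSup {d : ℝ | ∃ x ∈ Set.Icc (0 : ℝ) 1, ∃ y ∈ Set.Icc (0 : ℝ) 1, d = |g x y|}

/-!
The bivariate operator is the tensor product of two positive univariate operators that reproduce
constants, so `|B_{n,m}(f;x,y) - f(x,y)|` is at most the average of `|f(node) - f(x,y)|`, which
the mean value theorem bounds by `‖∂f/∂x‖ |node₁ - x| + ‖∂f/∂y‖ |node₂ - y|`. By Cauchy–Schwarz each
average of `|node - x|` is at most the square root of the second central moment, and the
`(p,q)`-Pascal rule gives `B_n(1) = 1`, `B_n(t) = x` and `B_n(t²) = x² + p^(n-1) x (1 - x) / [n]`,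
so that moment is `p^(n-1) (x - x²) / [n]`.
-/

variable {p q x : ℝ} {n k : ℕ}

lemma pqInt_zero : pqInt p q 0 = 0 :=
  Finset.sum_range_zero _

lemma pqInt_nonneg (hp : 0 ≤ p) (hq : 0 ≤ q) : 0 ≤ pqInt p q n :=
  Finset.sum_nonneg fun _ _ => by positivity

lemma pqInt_pos (hp : 0 < p) (hq : 0 < q) (hn : 0 < n) : 0 < pqInt p q n :=
  Finset.sum_pos (fun _ _ => by positivity) (Finset.nonempty_range_iff.mpr hn.ne')

lemma pqInt_add (a b : ℕ) :
    pqInt p q (a + b) = p ^ b * pqInt p q a + q ^ a * pqInt p q b := by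
  simp only [pqInt, Finset.sum_range_add, Finset.mul_sum]
  congr 1 <;> refine Finset.sum_congr rfl fun i hi => ?_
  · rw [Finset.mem_range] at hi
    rw [show a + b - 1 - i = b + (a - 1 - i) by omega, pow_add]
    ring
  · rw [show a + b - 1 - (a + i) = b - 1 - i by omega, pow_add]
    ring

lemma pqInt_succ : pqInt p q (n + 1) = p * pqInt p q n + q ^ n := by
  rw [pqInt_add n 1]
  simp [pqInt]

lemma pqFactorial_succ : pqFactorial p q (n + 1) = pqFactorial p q n * pqInt p q (n + 1) :=
  Finset.prod_range_succ _ _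

lemma pqFactorial_zero : pqFactorial p q 0 = 1 :=
  Finset.prod_range_zero _

lemma pqFactorial_pos (hp : 0 < p) (hq : 0 < q) : 0 < pqFactorial p q n :=
  Finset.prod_pos fun j _ => pqInt_pos hp hq j.succ_pos

lemma pqChoose_pos (hp : 0 < p) (hq : 0 < q) : 0 < pqChoose p q n k :=
  div_pos (pqFactorial_pos hp hq) (mul_pos (pqFactorial_pos hp hq) (pqFactorial_pos hp hq))

lemma pqChoose_zero_right (hp : 0 < p) (hq : 0 < q) : pqChoose p q n 0 = 1 := by
  simp [pqChoose, pqFactorial_zero, (pqFactorial_pos hp hq).ne']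

lemma pqChoose_self (hp : 0 < p) (hq : 0 < q) : pqChoose p q n n = 1 := by
  simp [pqChoose, pqFactorial_zero, (pqFactorial_pos hp hq).ne']

lemma pqChoose_succ_succ (hp : 0 < p) (hq : 0 < q) (hk : k < n) :
    pqChoose p q (n + 1) (k + 1)
      = q ^ (n - k) * pqChoose p q n k + p ^ (k + 1) * pqChoose p q n (k + 1) := by
  have hsplit : pqInt p q (n + 1)
      = p ^ (k + 1) * pqInt p q (n - k) + q ^ (n - k) * pqInt p q (k + 1) := by
    rw [← pqInt_add, show n - k + (k + 1) = n + 1 by omega]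
  have hnk : n - k = n - (k + 1) + 1 := by omega
  unfold pqChoose
  rw [show n + 1 - (k + 1) = n - k by omega, pqFactorial_succ (n := n),
    pqFactorial_succ (n := k), hnk, pqFactorial_succ (n := n - (k + 1)), ← hnk, hsplit]
  have := (pqFactorial_pos hp hq (n := n)).ne'
  have := (pqFactorial_pos hp hq (n := k)).ne'
  have := (pqFactorial_pos hp hq (n := n - (k + 1))).ne'
  have := (pqInt_pos hp hq (n := k + 1) k.succ_pos).ne'
  have := (pqInt_pos hp hq (n := n - k) (by omega)).ne'
  field_simp
  ring

lemma pqInt_succ_mul_pqChoose (hp : 0 < p) (hq : 0 < q) :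
    pqInt p q (n + 1) * pqChoose p q n k
      = pqChoose p q (n + 1) (k + 1) * pqInt p q (k + 1) := by
  unfold pqChoose
  rw [Nat.add_sub_add_right, pqFactorial_succ (n := n), pqFactorial_succ (n := k)]
  have := (pqFactorial_pos hp hq (n := n)).ne'
  have := (pqFactorial_pos hp hq (n := k)).ne'
  have := (pqFactorial_pos hp hq (n := n - k)).ne'
  have := (pqInt_pos hp hq (n := k + 1) k.succ_pos).ne'
  field_simp

private lemma succ_choose_two (n : ℕ) : (n + 1).choose 2 = n.choose 2 + n := by
  rw [Nat.choose_succ_succ', Nat.choose_one_right, add_comm]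

/-- `pqBasis` with the common factor `p ^ (-(n choose 2))` removed, so that its recursion in
`n` involves no division. -/
noncomputable def pqBasisScaled (p q : ℝ) (n k : ℕ) (x : ℝ) : ℝ :=
  p ^ (k.choose 2) * pqChoose p q n k * x ^ k *
    ∏ s ∈ Finset.range (n - k), (p ^ s - q ^ s * x)

lemma pqBasis_eq_div : pqBasis p q n k x = pqBasisScaled p q n k x / p ^ (n.choose 2) := by
  unfold pqBasis pqBasisScaled
  ring

lemma pqBasisScaled_succ_zero (hp : 0 < p) (hq : 0 < q) :
    pqBasisScaled p q (n + 1) 0 x = (p ^ n - q ^ n * x) * pqBasisScaled p q n 0 x := by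
  simp [pqBasisScaled, pqChoose_zero_right hp hq, Finset.prod_range_succ, mul_comm]

lemma pqBasisScaled_succ_self (hp : 0 < p) (hq : 0 < q) :
    pqBasisScaled p q (n + 1) (n + 1) x = x * p ^ n * pqBasisScaled p q n n x := by
  simp only [pqBasisScaled, pqChoose_self hp hq, Nat.sub_self, succ_choose_two, pow_add]
  ring

lemma pqBasisScaled_succ_succ (hp : 0 < p) (hq : 0 < q) (hk : k < n) :
    pqBasisScaled p q (n + 1) (k + 1) x
      = x * p ^ k * q ^ (n - k) * pqBasisScaled p q n k x
        + (p ^ n - p ^ (k + 1) * q ^ (n - (k + 1)) * x) * pqBasisScaled p q n (k + 1) x := by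
  have hpow : p ^ n = p ^ (k + 1) * p ^ (n - (k + 1)) := by
    rw [← pow_add, Nat.add_sub_cancel' hk]
  have hprod : ∏ s ∈ Finset.range (n - k), (p ^ s - q ^ s * x)
      = (∏ s ∈ Finset.range (n - (k + 1)), (p ^ s - q ^ s * x))
          * (p ^ (n - (k + 1)) - q ^ (n - (k + 1)) * x) := by
    rw [← Finset.prod_range_succ, show n - (k + 1) + 1 = n - k by omega]
  simp only [pqBasisScaled, pqChoose_succ_succ hp hq hk, Nat.add_sub_add_right, hprod,
    succ_choose_two, pow_add, hpow]
  ring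

lemma pqBasisScaled_succ_succ_mul_pqInt (hp : 0 < p) (hq : 0 < q) :
    pqBasisScaled p q (n + 1) (k + 1) x * pqInt p q (k + 1)
      = x * pqInt p q (n + 1) * p ^ k * pqBasisScaled p q n k x := by
  simp only [pqBasisScaled, Nat.add_sub_add_right, succ_choose_two, pow_add]
  linear_combination (p ^ k.choose 2 * p ^ k * x ^ (k + 1) *
    ∏ s ∈ Finset.range (n - k), (p ^ s - q ^ s * x)) *
      (pqInt_succ_mul_pqChoose hp hq (n := n) (k := k)).symm

/-- The `(p,q)`-Pascal rule, summed against an arbitrary weight `g`. -/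
lemma sum_pqBasisScaled_succ_mul (hp : 0 < p) (hq : 0 < q) (g : ℕ → ℝ) :
    ∑ k ∈ Finset.range (n + 2), pqBasisScaled p q (n + 1) k x * g k
      = ∑ k ∈ Finset.range (n + 1), pqBasisScaled p q n k x *
          ((p ^ n - p ^ k * q ^ (n - k) * x) * g k + x * p ^ k * q ^ (n - k) * g (k + 1)) := by
  have hmid : ∑ k ∈ Finset.range n, pqBasisScaled p q (n + 1) (k + 1) x * g (k + 1)
      = ∑ k ∈ Finset.range n, (pqBasisScaled p q n k x * (x * p ^ k * q ^ (n - k) * g (k + 1))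
          + pqBasisScaled p q n (k + 1) x *
              ((p ^ n - p ^ (k + 1) * q ^ (n - (k + 1)) * x) * g (k + 1))) :=
    Finset.sum_congr rfl fun k hk => by
      rw [pqBasisScaled_succ_succ hp hq (Finset.mem_range.mp hk)]
      ring
  simp only [mul_add, Finset.sum_add_distrib]
  rw [Finset.sum_range_succ', Finset.sum_range_succ, hmid, Finset.sum_add_distrib,
    pqBasisScaled_succ_zero hp hq, pqBasisScaled_succ_self hp hq,
    Finset.sum_range_succ' (fun k => pqBasisScaled p q n k x * _),
    Finset.sum_range_succ (fun k => pqBasisScaled p q n k x * (x * _ * _ * _))]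
  simp only [pow_zero, Nat.sub_zero, Nat.sub_self]
  ring

lemma sum_pqBasisScaled (hp : 0 < p) (hq : 0 < q) (n : ℕ) (x : ℝ) :
    ∑ k ∈ Finset.range (n + 1), pqBasisScaled p q n k x = p ^ (n.choose 2) := by
  induction n with
  | zero => simp [pqBasisScaled, pqChoose_self hp hq]
  | succ n ih =>
    have h := sum_pqBasisScaled_succ_mul hp hq (fun _ => 1) (n := n) (x := x)
    simp only [mul_one] at h
    rw [h, Finset.sum_congr rfl fun k _ => show _ = pqBasisScaled p q n k x * p ^ n by ring,
      ← Finset.sum_mul, ih, succ_choose_two, pow_add]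

lemma sum_pqBasisScaled_mul_pow_mul_pow (hp : 0 < p) (hq : 0 < q) (n : ℕ) (x : ℝ) :
    ∑ k ∈ Finset.range (n + 1), pqBasisScaled p q n k x * (q ^ k * p ^ (n - k))
      = p ^ (n.choose 2) * (p ^ n - (p ^ n - q ^ n) * x) := by
  induction n with
  | zero => simp [pqBasisScaled, pqChoose_self hp hq]
  | succ n ih =>
    have hterm : ∀ k ∈ Finset.range (n + 1),
        pqBasisScaled p q n k x * ((p ^ n - p ^ k * q ^ (n - k) * x) * (q ^ k * p ^ (n + 1 - k))
            + x * p ^ k * q ^ (n - k) * (q ^ (k + 1) * p ^ (n + 1 - (k + 1))))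
          = p ^ (n + 1) * (pqBasisScaled p q n k x * (q ^ k * p ^ (n - k)))
            + x * p ^ n * q ^ n * (q - p) * pqBasisScaled p q n k x := by
      intro k hk
      obtain ⟨m, rfl⟩ := Nat.exists_eq_add_of_le (Finset.mem_range_succ_iff.mp hk)
      rw [Nat.add_sub_add_right, add_assoc, Nat.add_sub_cancel_left, Nat.add_sub_cancel_left]
      ring
    rw [sum_pqBasisScaled_succ_mul hp hq, Finset.sum_congr rfl hterm, Finset.sum_add_distrib,
      ← Finset.mul_sum, ← Finset.mul_sum, ih, sum_pqBasisScaled hp hq, succ_choose_two]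
    ring

lemma sum_pqBasisScaled_mul_pow_mul_pqInt (hp : 0 < p) (hq : 0 < q) (n : ℕ) (x : ℝ) :
    ∑ k ∈ Finset.range (n + 1), pqBasisScaled p q n k x * (p ^ (n - k) * pqInt p q k)
      = x * pqInt p q n * p ^ (n.choose 2) := by
  cases n with
  | zero => simp [pqInt_zero]
  | succ n =>
    have hterm : ∀ k ∈ Finset.range (n + 1),
        pqBasisScaled p q (n + 1) (k + 1) x * (p ^ (n + 1 - (k + 1)) * pqInt p q (k + 1))
          = x * pqInt p q (n + 1) * p ^ n * pqBasisScaled p q n k x := by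
      intro k hk
      obtain ⟨m, rfl⟩ := Nat.exists_eq_add_of_le (Finset.mem_range_succ_iff.mp hk)
      rw [Nat.add_sub_add_right, mul_left_comm, pqBasisScaled_succ_succ_mul_pqInt hp hq,
        Nat.add_sub_cancel_left]
      ring
    rw [Finset.sum_range_succ', Finset.sum_congr rfl hterm, ← Finset.mul_sum,
      sum_pqBasisScaled hp hq, succ_choose_two, pow_add]
    simp only [pqInt_zero, mul_zero, add_zero]
    ring

lemma sum_pqBasisScaled_mul_pow_mul_pqInt_sq (hp : 0 < p) (hq : 0 < q) (n : ℕ) (x : ℝ) :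
    ∑ k ∈ Finset.range (n + 2),
        pqBasisScaled p q (n + 1) k x * (p ^ (n + 1 - k) * pqInt p q k) ^ 2
      = x * pqInt p q (n + 1) * p ^ n * p ^ (n.choose 2) *
          (p ^ n - (p ^ n - q ^ n) * x + p * x * pqInt p q n) := by
  have hterm : ∀ k ∈ Finset.range (n + 1),
      pqBasisScaled p q (n + 1) (k + 1) x * (p ^ (n + 1 - (k + 1)) * pqInt p q (k + 1)) ^ 2
        = x * pqInt p q (n + 1) * p ^ n *
            (pqBasisScaled p q n k x * (q ^ k * p ^ (n - k))
              + p * (pqBasisScaled p q n k x * (p ^ (n - k) * pqInt p q k))) := by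
    intro k hk
    obtain ⟨m, rfl⟩ := Nat.exists_eq_add_of_le (Finset.mem_range_succ_iff.mp hk)
    rw [Nat.add_sub_add_right, Nat.add_sub_cancel_left]
    linear_combination (p ^ m) ^ 2 * pqInt p q (k + 1) *
        pqBasisScaled_succ_succ_mul_pqInt hp hq (n := k + m) (k := k) (x := x)
      + (p ^ m) ^ 2 * x * pqInt p q (k + m + 1) * p ^ k * pqBasisScaled p q (k + m) k x *
        pqInt_succ (p := p) (q := q) (n := k)
  rw [Finset.sum_range_succ', Finset.sum_congr rfl hterm, ← Finset.mul_sum,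
    Finset.sum_add_distrib, ← Finset.mul_sum, sum_pqBasisScaled_mul_pow_mul_pow hp hq,
    sum_pqBasisScaled_mul_pow_mul_pqInt hp hq]
  simp only [pqInt_zero, mul_zero, zero_pow two_ne_zero, add_zero]
  ring

lemma sum_pqBasis (hp : 0 < p) (hq : 0 < q) (n : ℕ) (x : ℝ) :
    ∑ k ∈ Finset.range (n + 1), pqBasis p q n k x = 1 := by
  simp only [pqBasis_eq_div]
  rw [← Finset.sum_div, sum_pqBasisScaled hp hq, div_self (pow_ne_zero _ hp.ne')]

lemma pqBasis_nonneg (hq : 0 < q) (hqp : q ≤ p) (hx : x ∈ Set.Icc (0 : ℝ) 1) :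
    0 ≤ pqBasis p q n k x := by
  have hp : 0 < p := hq.trans_le hqp
  have hfactor : ∀ s ∈ Finset.range (n - k), 0 ≤ p ^ s - q ^ s * x := fun s _ =>
    sub_nonneg.mpr <|
      calc q ^ s * x ≤ q ^ s := mul_le_of_le_one_right (by positivity) hx.2
        _ ≤ p ^ s := pow_le_pow_left₀ hq.le hqp s
  have := (pqChoose_pos hp hq (n := n) (k := k)).le
  have := hx.1
  have := Finset.prod_nonneg hfactor
  unfold pqBasis
  positivity

lemma pqNode_mem_Icc (hp : 0 < p) (hq : 0 < q) (hn : 0 < n) (hk : k ≤ n) :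
    pqNode p q n k ∈ Set.Icc (0 : ℝ) 1 := by
  have hN := pqInt_pos hp hq hn
  have hsplit := pqInt_add (p := p) (q := q) k (n - k)
  rw [Nat.add_sub_cancel' hk] at hsplit
  have := pqInt_nonneg hp.le hq.le (n := k)
  have := pqInt_nonneg hp.le hq.le (n := n - k)
  refine ⟨by unfold pqNode; positivity, ?_⟩
  rw [pqNode, div_le_one hN]
  nlinarith [pow_pos hq k]

lemma sum_pqBasis_mul_pqNode_sub_sq (hp : 0 < p) (hq : 0 < q) (hn : 0 < n) (x : ℝ) :
    ∑ k ∈ Finset.range (n + 1), pqBasis p q n k x * (pqNode p q n k - x) ^ 2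
      = p ^ (n - 1) / pqInt p q n * (x - x ^ 2) := by
  obtain ⟨n, rfl⟩ : ∃ n', n = n' + 1 := ⟨n - 1, by omega⟩
  have hN := pqInt_pos hp hq n.succ_pos
  have hc : 0 < p ^ (n + 1).choose 2 := by positivity
  have hsummand : ∀ k ∈ Finset.range (n + 2),
      pqBasis p q (n + 1) k x * (pqNode p q (n + 1) k - x) ^ 2
        = 1 / (p ^ (n + 1).choose 2 * pqInt p q (n + 1) ^ 2) *
              (pqBasisScaled p q (n + 1) k x * (p ^ (n + 1 - k) * pqInt p q k) ^ 2)
            - 2 * x / (p ^ (n + 1).choose 2 * pqInt p q (n + 1)) *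
              (pqBasisScaled p q (n + 1) k x * (p ^ (n + 1 - k) * pqInt p q k))
            + x ^ 2 / p ^ (n + 1).choose 2 * pqBasisScaled p q (n + 1) k x := by
    intro k _
    rw [pqBasis_eq_div, pqNode]
    field_simp
    ring
  rw [Finset.sum_congr rfl hsummand, Finset.sum_add_distrib, Finset.sum_sub_distrib,
    ← Finset.mul_sum, ← Finset.mul_sum, ← Finset.mul_sum,
    sum_pqBasisScaled_mul_pow_mul_pqInt_sq hp hq, sum_pqBasisScaled_mul_pow_mul_pqInt hp hq,
    sum_pqBasisScaled hp hq, Nat.add_sub_cancel]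
  rw [pqInt_succ] at hN ⊢
  rw [succ_choose_two, pow_add] at hc ⊢
  field_simp
  ring

lemma sum_mul_abs_le_sqrt_sum_mul_sq {ι : Type*} {s : Finset ι} {w d : ι → ℝ}
    (hw : ∀ i ∈ s, 0 ≤ w i) (hsum : ∑ i ∈ s, w i = 1) :
    ∑ i ∈ s, w i * |d i| ≤ √(∑ i ∈ s, w i * d i ^ 2) := by
  apply Real.le_sqrt_of_sq_le
  have hsq : ∀ i ∈ s, (w i * |d i|) ^ 2 ≤ w i * (w i * d i ^ 2) := fun i _ =>
    (by rw [mul_pow, sq_abs]; ring : (w i * |d i|) ^ 2 = w i * (w i * d i ^ 2)).le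
  simpa [hsum] using Finset.sum_sq_le_sum_mul_sum_of_sq_le_mul s hw
    (fun i hi => mul_nonneg (hw i hi) (sq_nonneg (d i))) hsq

lemma sum_pqBasis_mul_abs_pqNode_sub_le (hq : 0 < q) (hqp : q ≤ p) (hn : 0 < n)
    (hx : x ∈ Set.Icc (0 : ℝ) 1) :
    ∑ k ∈ Finset.range (n + 1), pqBasis p q n k x * |pqNode p q n k - x|
      ≤ √(p ^ (n - 1) / pqInt p q n * (x - x ^ 2)) := by
  have hp : 0 < p := hq.trans_le hqp
  rw [← sum_pqBasis_mul_pqNode_sub_sq hp hq hn]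
  exact sum_mul_abs_le_sqrt_sum_mul_sq (fun k _ => pqBasis_nonneg hq hqp hx) (sum_pqBasis hp hq n x)

lemma abs_sum_sum_mul_mul_sub_le {ι κ : Type*} {s : Finset ι} {t : Finset κ}
    {w α : ι → ℝ} {v β : κ → ℝ} {g : ι → κ → ℝ} {c : ℝ}
    (hw : ∀ i ∈ s, 0 ≤ w i) (hv : ∀ j ∈ t, 0 ≤ v j)
    (hws : ∑ i ∈ s, w i = 1) (hvt : ∑ j ∈ t, v j = 1)
    (hg : ∀ i ∈ s, ∀ j ∈ t, |g i j - c| ≤ α i + β j) :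
    |∑ i ∈ s, ∑ j ∈ t, w i * v j * g i j - c|
      ≤ ∑ i ∈ s, w i * α i + ∑ j ∈ t, v j * β j := by
  have hcentre : ∑ i ∈ s, ∑ j ∈ t, w i * v j * g i j - c
      = ∑ i ∈ s, ∑ j ∈ t, w i * v j * (g i j - c) := by
    simp only [mul_sub, Finset.sum_sub_distrib, ← Finset.sum_mul, ← Finset.mul_sum, hvt, hws,
      mul_one, one_mul]
  calc |∑ i ∈ s, ∑ j ∈ t, w i * v j * g i j - c|
      ≤ ∑ i ∈ s, ∑ j ∈ t, w i * v j * (α i + β j) := by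
        rw [hcentre]
        refine (Finset.abs_sum_le_sum_abs _ _).trans <| Finset.sum_le_sum fun i hi =>
          (Finset.abs_sum_le_sum_abs _ _).trans <| Finset.sum_le_sum fun j hj => ?_
        have hwv := mul_nonneg (hw i hi) (hv j hj)
        rw [abs_mul, abs_of_nonneg hwv]
        exact mul_le_mul_of_nonneg_left (hg i hi j hj) hwv
    _ = ∑ i ∈ s, w i * α i + ∑ j ∈ t, v j * β j := by
        simp only [mul_add, Finset.sum_add_distrib, mul_right_comm _ _ (α _), ← Finset.sum_mul,
          ← Finset.mul_sum, mul_assoc, hvt, hws, mul_one, one_mul]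

lemma supNorm2_nonneg (g : ℝ → ℝ → ℝ) : 0 ≤ supNorm2 g :=
  Real.sSup_nonneg fun _ ⟨_, _, _, _, hd⟩ => hd ▸ abs_nonneg _

lemma abs_le_supNorm2 {g : ℝ → ℝ → ℝ}
    (hg : ContinuousOn (fun z : ℝ × ℝ => g z.1 z.2) (Set.Icc 0 1 ×ˢ Set.Icc 0 1))
    {u v : ℝ} (hu : u ∈ Set.Icc (0 : ℝ) 1) (hv : v ∈ Set.Icc (0 : ℝ) 1) :
    |g u v| ≤ supNorm2 g := by
  have hset : {d : ℝ | ∃ x ∈ Set.Icc (0 : ℝ) 1, ∃ y ∈ Set.Icc (0 : ℝ) 1, d = |g x y|}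
      = (fun z : ℝ × ℝ => |g z.1 z.2|) '' (Set.Icc 0 1 ×ˢ Set.Icc 0 1) := by
    ext d
    constructor
    · rintro ⟨a, ha, b, hb, rfl⟩
      exact ⟨(a, b), ⟨ha, hb⟩, rfl⟩
    · rintro ⟨⟨a, b⟩, ⟨ha, hb⟩, rfl⟩
      exact ⟨a, ha, b, hb, rfl⟩
  have hbdd : BddAbove ((fun z : ℝ × ℝ => |g z.1 z.2|) '' (Set.Icc 0 1 ×ˢ Set.Icc 0 1)) :=
    ((isCompact_Icc.prod isCompact_Icc).image_of_continuousOn hg.abs).bddAbove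
  exact le_csSup (hset ▸ hbdd) ⟨u, hu, v, hv, rfl⟩

lemma abs_sub_le_supNorm2_pdx_pdy {f : ℝ → ℝ → ℝ}
    (hdiff : ∀ x ∈ Set.Icc (0 : ℝ) 1, ∀ y ∈ Set.Icc (0 : ℝ) 1,
      DifferentiableAt ℝ (fun u => f u y) x ∧ DifferentiableAt ℝ (fun v => f x v) y)
    (hfx : ContinuousOn (fun z : ℝ × ℝ => pdx f z.1 z.2) (Set.Icc 0 1 ×ˢ Set.Icc 0 1))
    (hfy : ContinuousOn (fun z : ℝ × ℝ => pdy f z.1 z.2) (Set.Icc 0 1 ×ˢ Set.Icc 0 1))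
    {a b x y : ℝ} (ha : a ∈ Set.Icc (0 : ℝ) 1) (hb : b ∈ Set.Icc (0 : ℝ) 1)
    (hx : x ∈ Set.Icc (0 : ℝ) 1) (hy : y ∈ Set.Icc (0 : ℝ) 1) :
    |f a b - f x y| ≤ supNorm2 (pdx f) * |a - x| + supNorm2 (pdy f) * |b - y| := by
  have hhor : |f a b - f x b| ≤ supNorm2 (pdx f) * |a - x| := by
    simpa only [Real.norm_eq_abs] using (convex_Icc (0 : ℝ) 1).norm_image_sub_le_of_norm_deriv_le
      (f := fun u => f u b) (fun t ht => (hdiff t ht b hb).1)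
      (fun t ht => (Real.norm_eq_abs _).trans_le (abs_le_supNorm2 hfx ht hb)) hx ha
  have hver : |f x b - f x y| ≤ supNorm2 (pdy f) * |b - y| := by
    simpa only [Real.norm_eq_abs] using (convex_Icc (0 : ℝ) 1).norm_image_sub_le_of_norm_deriv_le
      (f := fun v => f x v) (fun t ht => (hdiff x hx t ht).2)
      (fun t ht => (Real.norm_eq_abs _).trans_le (abs_le_supNorm2 hfy hx ht)) hy hb
  calc |f a b - f x y| = |(f a b - f x b) + (f x b - f x y)| := by rw [sub_add_sub_cancel]
    _ ≤ |f a b - f x b| + |f x b - f x y| := abs_add_le _ _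
    _ ≤ _ := add_le_add hhor hver

theorem pqBernstein2_rate_C1_general (p₁ q₁ p₂ q₂ : ℝ) (n m : ℕ)
    (hq₁ : 0 < q₁) (hq₁p₁ : q₁ < p₁)
    (hq₂ : 0 < q₂) (hq₂p₂ : q₂ < p₂)
    (hn : 1 ≤ n) (hm : 1 ≤ m) (f : ℝ → ℝ → ℝ)
    (hdiff : ∀ x ∈ Set.Icc (0 : ℝ) 1, ∀ y ∈ Set.Icc (0 : ℝ) 1,
      DifferentiableAt ℝ (fun u => f u y) x ∧ DifferentiableAt ℝ (fun v => f x v) y)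
    (hfx : ContinuousOn (fun z : ℝ × ℝ => pdx f z.1 z.2)
      (Set.Icc (0 : ℝ) 1 ×ˢ Set.Icc (0 : ℝ) 1))
    (hfy : ContinuousOn (fun z : ℝ × ℝ => pdy f z.1 z.2)
      (Set.Icc (0 : ℝ) 1 ×ˢ Set.Icc (0 : ℝ) 1))
    (x y : ℝ) (hx : x ∈ Set.Icc (0 : ℝ) 1) (hy : y ∈ Set.Icc (0 : ℝ) 1) :
    |pqBernstein2 p₁ q₁ p₂ q₂ n m f x y - f x y| ≤
      supNorm2 (pdx f) * Real.sqrt ((p₁ ^ (n - 1) / pqInt p₁ q₁ n) * (x - x ^ 2)) +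
      supNorm2 (pdy f) * Real.sqrt ((p₂ ^ (m - 1) / pqInt p₂ q₂ m) * (y - y ^ 2)) := by
  have hp₁ : 0 < p₁ := hq₁.trans hq₁p₁
  have hp₂ : 0 < p₂ := hq₂.trans hq₂p₂
  calc |pqBernstein2 p₁ q₁ p₂ q₂ n m f x y - f x y|
      ≤ ∑ k ∈ Finset.range (n + 1),
            pqBasis p₁ q₁ n k x * (supNorm2 (pdx f) * |pqNode p₁ q₁ n k - x|)
        + ∑ j ∈ Finset.range (m + 1),
            pqBasis p₂ q₂ m j y * (supNorm2 (pdy f) * |pqNode p₂ q₂ m j - y|) :=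
      abs_sum_sum_mul_mul_sub_le (fun _ _ => pqBasis_nonneg hq₁ hq₁p₁.le hx)
        (fun _ _ => pqBasis_nonneg hq₂ hq₂p₂.le hy) (sum_pqBasis hp₁ hq₁ n x)
        (sum_pqBasis hp₂ hq₂ m y) fun k hk j hj => abs_sub_le_supNorm2_pdx_pdy hdiff hfx hfy
          (pqNode_mem_Icc hp₁ hq₁ hn (Finset.mem_range_succ_iff.mp hk))
          (pqNode_mem_Icc hp₂ hq₂ hm (Finset.mem_range_succ_iff.mp hj)) hx hy
    _ = supNorm2 (pdx f) *
            ∑ k ∈ Finset.range (n + 1), pqBasis p₁ q₁ n k x * |pqNode p₁ q₁ n k - x|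
        + supNorm2 (pdy f) *
            ∑ j ∈ Finset.range (m + 1), pqBasis p₂ q₂ m j y * |pqNode p₂ q₂ m j - y| := by
      simp only [Finset.mul_sum, mul_left_comm (supNorm2 _)]
    _ ≤ _ := by
      have := supNorm2_nonneg (pdx f)
      have := supNorm2_nonneg (pdy f)
      gcongr
      · exact sum_pqBasis_mul_abs_pqNode_sub_le hq₁ hq₁p₁.le hn hx
      · exact sum_pqBasis_mul_abs_pqNode_sub_le hq₂ hq₂p₂.le hm hy

theorem pqBernstein2_rate_C1 (p₁ q₁ p₂ q₂ : ℝ) (n m : ℕ)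
    (hq₁ : 0 < q₁) (hq₁p₁ : q₁ < p₁) (hp₁ : p₁ ≤ 1)
    (hq₂ : 0 < q₂) (hq₂p₂ : q₂ < p₂) (hp₂ : p₂ ≤ 1)
    (hn : 1 ≤ n) (hm : 1 ≤ m) (f : ℝ → ℝ → ℝ)
    (hf : ContinuousOn (fun z : ℝ × ℝ => f z.1 z.2)
      (Set.Icc (0 : ℝ) 1 ×ˢ Set.Icc (0 : ℝ) 1))
    (hdiff : ∀ x ∈ Set.Icc (0 : ℝ) 1, ∀ y ∈ Set.Icc (0 : ℝ) 1,
      DifferentiableAt ℝ (fun u => f u y) x ∧ DifferentiableAt ℝ (fun v => f x v) y)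
    (hfx : ContinuousOn (fun z : ℝ × ℝ => pdx f z.1 z.2)
      (Set.Icc (0 : ℝ) 1 ×ˢ Set.Icc (0 : ℝ) 1))
    (hfy : ContinuousOn (fun z : ℝ × ℝ => pdy f z.1 z.2)
      (Set.Icc (0 : ℝ) 1 ×ˢ Set.Icc (0 : ℝ) 1))
    (x y : ℝ) (hx : x ∈ Set.Icc (0 : ℝ) 1) (hy : y ∈ Set.Icc (0 : ℝ) 1) :
    |pqBernstein2 p₁ q₁ p₂ q₂ n m f x y - f x y| ≤
      supNorm2 (pdx f) * Real.sqrt ((p₁ ^ (n - 1) / pqInt p₁ q₁ n) * (x - x ^ 2)) +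
      supNorm2 (pdy f) * Real.sqrt ((p₂ ^ (m - 1) / pqInt p₂ q₂ m) * (y - y ^ 2)) :=
  pqBernstein2_rate_C1_general p₁ q₁ p₂ q₂ n m hq₁ hq₁p₁ hq₂ hq₂p₂ hn hm f hdiff hfx hfy x y hx hy
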